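/- Let 0 < α₂ < 1/2 and α₁ = 1 − 2α₂, and let η be the probability measure on ((√2−1)², (√2+1)²) with density √(((√2+1)² − x)(x − (√2−1)²))/(2πx) · (α₁ + α₂/x²). Then the moments m_k = ∫ x^k dη(x) satisfy: m₁ = 2 − 3α₂, m₂ = 6 − 11α₂, m₃ = 2(11 − 21α₂), and m₄ = 6(15 − 29α₂). -/

import Mathlib

open MeasureTheory Set

/-- The probability measure `η_{α₁,α₂}` on `((√2-1)², (√2+1)²)` with density
`√(((√2+1)² - x)(x - (√2-1)²))/(2πx) · (α₁ + α₂/x²)`, where `α₁ = 1 - 2α₂`. -/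
noncomputable def etaMeasure (α₂ : ℝ) : Measure ℝ :=
  MeasureTheory.volume.withDensity
    (fun x => ENNReal.ofReal
      ((Set.Ioo ((Real.sqrt 2 - 1) ^ 2) ((Real.sqrt 2 + 1) ^ 2)).indicator
        (fun x =>
          Real.sqrt (((Real.sqrt 2 + 1) ^ 2 - x) * (x - (Real.sqrt 2 - 1) ^ 2)) /
              (2 * Real.pi * x) * ((1 - 2 * α₂) + α₂ / x ^ 2)) x))

/-!
On the support `(a, b) = ((√2-1)², (√2+1)²)` we have `(b - x)(x - a) = 6x - 1 - x² =: q(x)`, and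
`ab = 1`. The `k`-th moment is `(2π)⁻¹ ∫ₐᵇ p √q` with `p(x) = (α₁ + α₂/x²) x^(k-1)`, and such an
integral has the elementary antiderivative
  `R √q + C arcsin ((x - 3)/(2√2)) - D arcsin ((1/x - 3)/(2√2))`
whenever `R' q + R (3 - x) + C + D/x = p q`; for `k ≤ 4` a Laurent polynomial
`R = c₀ + c₁x + ⋯ + c₄x⁴ + d/x` does it. Since `√q` vanishes at `a` and `b`, and `x ↦ 1/x` swaps
`a` and `b`, the integral is `(C + D) π`.
-/

open Real

lemma sq_sqrt_two : √2 ^ 2 = 2 := sq_sqrt zero_le_two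

lemma sub_mul_sub_sq_sqrt_two (x : ℝ) :
    ((√2 + 1) ^ 2 - x) * (x - (√2 - 1) ^ 2) = 6 * x - 1 - x ^ 2 := by
  linear_combination (2 * x - √2 ^ 2) * sq_sqrt_two

lemma pos_of_quad_pos {x : ℝ} (hx : 0 < 6 * x - 1 - x ^ 2) : 0 < x := by
  nlinarith [sq_nonneg x]

lemma quad_pos_of_mem_Ioo {x : ℝ} (hx : x ∈ Ioo ((√2 - 1) ^ 2) ((√2 + 1) ^ 2)) :
    0 < 6 * x - 1 - x ^ 2 := by
  rw [← sub_mul_sub_sq_sqrt_two]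
  exact mul_pos (sub_pos.2 hx.2) (sub_pos.2 hx.1)

lemma pos_of_mem_Icc {x : ℝ} (hx : x ∈ Icc ((√2 - 1) ^ 2) ((√2 + 1) ^ 2)) : 0 < x :=
  (pow_pos (sub_pos.2 one_lt_sqrt_two) 2).trans_le hx.1

lemma sq_sqrt_two_sub_one_le : (√2 - 1) ^ 2 ≤ (√2 + 1) ^ 2 := by
  gcongr <;> linarith [one_lt_sqrt_two]

lemma hasDerivAt_arcsin_sub_three_div {x : ℝ} (hx : 0 < 6 * x - 1 - x ^ 2) :
    HasDerivAt (fun y => arcsin ((y - 3) / (2 * √2))) (1 / √(6 * x - 1 - x ^ 2)) x := by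
  have h8 : (2 * √2) ^ 2 = 8 := by rw [mul_pow, sq_sqrt_two]; norm_num
  have hlt : ((x - 3) / (2 * √2)) ^ 2 < 1 := by
    rw [div_pow, h8, div_lt_one (by norm_num)]; linarith
  have hne : (x - 3) / (2 * √2) ≠ -1 ∧ (x - 3) / (2 * √2) ≠ 1 := by
    constructor <;> rintro h <;> norm_num [h] at hlt
  have hsqrt : √(1 - ((x - 3) / (2 * √2)) ^ 2) = √(6 * x - 1 - x ^ 2) / (2 * √2) := by
    rw [show 1 - ((x - 3) / (2 * √2)) ^ 2 = (√(6 * x - 1 - x ^ 2) / (2 * √2)) ^ 2 by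
      rw [div_pow, div_pow, sq_sqrt hx.le, h8]; ring]
    exact sqrt_sq (by positivity)
  refine ((hasDerivAt_arcsin hne.1 hne.2).comp x
    (((hasDerivAt_id x).sub_const 3).div_const (2 * √2))).congr_deriv ?_
  rw [hsqrt]
  field_simp

lemma hasDerivAt_arcsin_inv_sub_three_div {x : ℝ} (hx : 0 < 6 * x - 1 - x ^ 2) :
    HasDerivAt (fun y => arcsin ((y⁻¹ - 3) / (2 * √2)))
      (-(1 / (x * √(6 * x - 1 - x ^ 2)))) x := by
  have hx0 := pos_of_quad_pos hx
  have hinv : 6 * x⁻¹ - 1 - x⁻¹ ^ 2 = (6 * x - 1 - x ^ 2) / x ^ 2 := by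
    field_simp; ring
  have hsqrt : √(6 * x⁻¹ - 1 - x⁻¹ ^ 2) = √(6 * x - 1 - x ^ 2) / x := by
    rw [hinv, sqrt_div' _ (by positivity), sqrt_sq hx0.le]
  refine ((hasDerivAt_arcsin_sub_three_div (hinv ▸ div_pos hx (by positivity))).comp x
    (hasDerivAt_inv hx0.ne')).congr_deriv ?_
  rw [hsqrt]
  field_simp

lemma inv_sq_sqrt_two_add_one : ((√2 + 1) ^ 2)⁻¹ = (√2 - 1) ^ 2 := by
  rw [← inv_sqrt_two_sub_one, ← inv_pow, inv_inv]

lemma inv_sq_sqrt_two_sub_one : ((√2 - 1) ^ 2)⁻¹ = (√2 + 1) ^ 2 := by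
  rw [← inv_pow, inv_sqrt_two_sub_one]

lemma arcsin_sq_sqrt_two_add_one_sub_three_div :
    arcsin (((√2 + 1) ^ 2 - 3) / (2 * √2)) = π / 2 := by
  rw [← arcsin_one]; congr 1
  field_simp; linear_combination sq_sqrt_two

lemma arcsin_sq_sqrt_two_sub_one_sub_three_div :
    arcsin (((√2 - 1) ^ 2 - 3) / (2 * √2)) = -(π / 2) := by
  rw [← arcsin_neg_one]; congr 1
  field_simp; linear_combination sq_sqrt_two

theorem integral_mul_sqrt_eq_of_hasDerivAt {p R R' : ℝ → ℝ} {C D : ℝ}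
    (hp : ContinuousOn p (Icc ((√2 - 1) ^ 2) ((√2 + 1) ^ 2)))
    (hR : ContinuousOn R (Icc ((√2 - 1) ^ 2) ((√2 + 1) ^ 2)))
    (hR' : ∀ x ∈ Ioo ((√2 - 1) ^ 2) ((√2 + 1) ^ 2), HasDerivAt R (R' x) x)
    (h : ∀ x ∈ Ioo ((√2 - 1) ^ 2) ((√2 + 1) ^ 2),
      R' x * (6 * x - 1 - x ^ 2) + R x * (3 - x) + C + D / x = p x * (6 * x - 1 - x ^ 2)) :
    ∫ x in (√2 - 1) ^ 2..(√2 + 1) ^ 2, p x * √(6 * x - 1 - x ^ 2) = (C + D) * π := by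
  set F : ℝ → ℝ := fun x => R x * √(6 * x - 1 - x ^ 2)
    + C * arcsin ((x - 3) / (2 * √2)) - D * arcsin ((x⁻¹ - 3) / (2 * √2))
  have hF : ContinuousOn F (Icc ((√2 - 1) ^ 2) ((√2 + 1) ^ 2)) := by
    have hinv : ContinuousOn (fun x : ℝ => x⁻¹) (Icc ((√2 - 1) ^ 2) ((√2 + 1) ^ 2)) :=
      continuousOn_inv₀.mono fun x hx => (pos_of_mem_Icc hx).ne'
    fun_prop
  have hF' : ∀ x ∈ Ioo ((√2 - 1) ^ 2) ((√2 + 1) ^ 2),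
      HasDerivAt F (p x * √(6 * x - 1 - x ^ 2)) x := by
    intro x hx
    have hq := quad_pos_of_mem_Ioo hx
    have hx0 := pos_of_quad_pos hq
    have hsq : HasDerivAt (fun y => √(6 * y - 1 - y ^ 2))
        ((6 - 2 * x) / (2 * √(6 * x - 1 - x ^ 2))) x :=
      ((((hasDerivAt_id x).const_mul 6).sub_const 1).sub (hasDerivAt_pow 2 x)).congr_deriv
        (by simp) |>.sqrt hq.ne'
    refine ((((hR' x hx).mul hsq).add ((hasDerivAt_arcsin_sub_three_div hq).const_mul C)).sub
      ((hasDerivAt_arcsin_inv_sub_three_div hq).const_mul D)).congr_deriv ?_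
    have hs : √(6 * x - 1 - x ^ 2) ^ 2 = 6 * x - 1 - x ^ 2 := sq_sqrt hq.le
    have hs0 : 0 < √(6 * x - 1 - x ^ 2) := sqrt_pos.2 hq
    generalize √(6 * x - 1 - x ^ 2) = s at hs hs0 ⊢
    calc _ = (R' x * (6 * x - 1 - x ^ 2) + R x * (3 - x) + C + D / x) / s := by
          rw [← hs]; field_simp; ring
      _ = p x * s := by rw [h x hx, ← hs]; field_simp
  rw [intervalIntegral.integral_eq_sub_of_hasDerivAt_of_le sq_sqrt_two_sub_one_le hF hF'
    ((hp.mul (by fun_prop)).intervalIntegrable_of_Icc sq_sqrt_two_sub_one_le)]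
  simp only [F, ← sub_mul_sub_sq_sqrt_two, sub_self, zero_mul, mul_zero, sqrt_zero,
    inv_sq_sqrt_two_add_one, inv_sq_sqrt_two_sub_one, arcsin_sq_sqrt_two_add_one_sub_three_div,
    arcsin_sq_sqrt_two_sub_one_sub_three_div]
  ring

lemma integral_etaMeasure {α₂ : ℝ} (h0 : 0 ≤ α₂) (h12 : α₂ ≤ 1 / 2) (f : ℝ → ℝ) :
    ∫ x, f x ∂etaMeasure α₂ = ∫ x in (√2 - 1) ^ 2..(√2 + 1) ^ 2,
      √(6 * x - 1 - x ^ 2) / (2 * π * x) * (1 - 2 * α₂ + α₂ / x ^ 2) * f x := by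
  rw [etaMeasure, integral_withDensity_eq_integral_toReal_smul
      ((Measurable.indicator (by fun_prop) measurableSet_Ioo).ennreal_ofReal)
      (ae_of_all _ fun _ => ENNReal.ofReal_lt_top),
    intervalIntegral.integral_of_le sq_sqrt_two_sub_one_le, integral_Ioc_eq_integral_Ioo,
    ← integral_indicator measurableSet_Ioo]
  congr 1 with x
  by_cases hx : x ∈ Ioo ((√2 - 1) ^ 2) ((√2 + 1) ^ 2)
  · have hx0 : 0 < x := pos_of_mem_Icc (Ioo_subset_Icc_self hx)
    have hdens : 0 ≤ √(6 * x - 1 - x ^ 2) / (2 * π * x) * (1 - 2 * α₂ + α₂ / x ^ 2) := by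
      have : 0 ≤ 1 - 2 * α₂ := by linarith
      positivity
    simp only [indicator_of_mem hx, sub_mul_sub_sq_sqrt_two, ENNReal.toReal_ofReal hdens,
      smul_eq_mul]
  · simp [indicator_of_notMem hx]

lemma integral_pow_etaMeasure_eq {α₂ : ℝ} (h0 : 0 ≤ α₂) (h12 : α₂ ≤ 1 / 2) (k : ℕ)
    (c₀ c₁ c₂ c₃ c₄ d C D : ℝ)
    (h : ∀ x ≠ 0,
      (c₁ + 2 * c₂ * x + 3 * c₃ * x ^ 2 + 4 * c₄ * x ^ 3 - d / x ^ 2) * (6 * x - 1 - x ^ 2)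
        + (c₀ + c₁ * x + c₂ * x ^ 2 + c₃ * x ^ 3 + c₄ * x ^ 4 + d / x) * (3 - x) + C + D / x
      = (1 - 2 * α₂ + α₂ / x ^ 2) * x ^ k / x * (6 * x - 1 - x ^ 2)) :
    ∫ x, x ^ k ∂etaMeasure α₂ = (C + D) / 2 := by
  have hR' : ∀ x ≠ 0,
      HasDerivAt (fun y => c₀ + c₁ * y + c₂ * y ^ 2 + c₃ * y ^ 3 + c₄ * y ^ 4 + d / y)
      (c₁ + 2 * c₂ * x + 3 * c₃ * x ^ 2 + 4 * c₄ * x ^ 3 - d / x ^ 2) x := fun x hx =>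
    ((((((hasDerivAt_id x).const_mul c₁).const_add c₀).add
      ((hasDerivAt_pow 2 x).const_mul c₂)).add ((hasDerivAt_pow 3 x).const_mul c₃)).add
      ((hasDerivAt_pow 4 x).const_mul c₄)).add
      ((hasDerivAt_const x d).div (hasDerivAt_id x) hx) |>.congr_deriv (by simp; ring)
  have hIoo : ∀ x ∈ Ioo ((√2 - 1) ^ 2) ((√2 + 1) ^ 2), x ≠ 0 := fun x hx =>
    (pos_of_quad_pos (quad_pos_of_mem_Ioo hx)).ne'
  have key := integral_mul_sqrt_eq_of_hasDerivAt
    (p := fun x => (1 - 2 * α₂ + α₂ / x ^ 2) * x ^ k / x)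
    (by fun_prop (disch := intro x hx; have := pos_of_mem_Icc hx; positivity))
    (by fun_prop (disch := intro x hx; have := pos_of_mem_Icc hx; positivity))
    (fun x hx => hR' x (hIoo x hx)) (fun x hx => h x (hIoo x hx))
  calc ∫ x, x ^ k ∂etaMeasure α₂
      = ∫ x in (√2 - 1) ^ 2..(√2 + 1) ^ 2, (2 * π)⁻¹ *
          ((1 - 2 * α₂ + α₂ / x ^ 2) * x ^ k / x * √(6 * x - 1 - x ^ 2)) := by
        rw [integral_etaMeasure h0 h12]
        congr 1 with x
        ring
    _ = (C + D) / 2 := by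
        rw [intervalIntegral.integral_const_mul, key]
        field_simp

/-- For `0 < α₂ < 1/2` and `α₁ = 1 - 2α₂`, the moments of `η` satisfy
`m₁ = 2 - 3α₂`, `m₂ = 6 - 11α₂`, `m₃ = 2(11 - 21α₂)`, `m₄ = 6(15 - 29α₂)`. -/
theorem eta_moments (α₂ : ℝ) (h0 : 0 < α₂) (h12 : α₂ < 1 / 2) :
    (∫ x : ℝ, x ∂(etaMeasure α₂)) = 2 - 3 * α₂ ∧
    (∫ x : ℝ, x ^ 2 ∂(etaMeasure α₂)) = 6 - 11 * α₂ ∧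
    (∫ x : ℝ, x ^ 3 ∂(etaMeasure α₂)) = 2 * (11 - 21 * α₂) ∧
    (∫ x : ℝ, x ^ 4 ∂(etaMeasure α₂)) = 6 * (15 - 29 * α₂) := by
  have moment := integral_pow_etaMeasure_eq h0.le h12.le
  -- the coefficients of `R` and the constants `C`, `D`, found by matching powers of `x`
  refine ⟨?_, ?_, ?_, ?_⟩
  · have h1 := moment 1 (-3 * (1 - 2 * α₂) / 2) ((1 - 2 * α₂) / 2) 0 0 0 (-α₂)
      (4 * (1 - 2 * α₂) - α₂) (3 * α₂) fun x hx => by field_simp; ring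
    simp only [pow_one] at h1
    rw [h1]
    ring
  · rw [moment 2 (-25 * (1 - 2 * α₂) / 6 + α₂) (-(1 - 2 * α₂) / 2) ((1 - 2 * α₂) / 3) 0 0 0
      (12 * (1 - 2 * α₂) + 3 * α₂) (-α₂) fun x hx => by field_simp; ring]
    ring
  · rw [moment 3 (-61 * (1 - 2 * α₂) / 4 - 3 * α₂ / 2) (-7 * (1 - 2 * α₂) / 4 + α₂ / 2)
      (-(1 - 2 * α₂) / 4) ((1 - 2 * α₂) / 4) 0 0 (44 * (1 - 2 * α₂) + 4 * α₂) 0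
      fun x hx => by field_simp; ring]
    ring
  · rw [moment 4 (-3743 * (1 - 2 * α₂) / 60 - 25 * α₂ / 6) (-143 * (1 - 2 * α₂) / 20 - α₂ / 2)
      (-59 * (1 - 2 * α₂) / 60 + α₂ / 3) (-3 * (1 - 2 * α₂) / 20) ((1 - 2 * α₂) / 5) 0
      (180 * (1 - 2 * α₂) + 12 * α₂) 0 fun x hx => by field_simp; ring]
    ring
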